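/- Every cluster point x̄ of the sequence (x^k) generated by the BP-MAP algorithm is a solution of the basis pursuit problem, i.e. x̄ ∈ M and ‖x̄‖₁ = r̄; moreover, along any subsequence (x^{k_j}) converging to x̄, the corresponding subsequence (z^{k_j}) also converges to x̄. -/

import Mathlib

open Filter Topology

/-- The ℓ¹-norm on ℝⁿ. -/
noncomputable def norm1 {n : ℕ} (x : EuclideanSpace ℝ (Fin n)) : ℝ := ∑ i, |x i|

lemma norm1_nonneg {n : ℕ} (x : EuclideanSpace ℝ (Fin n)) : 0 ≤ norm1 x :=
  Finset.sum_nonneg fun i _ => abs_nonneg _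

lemma norm1_continuous {n : ℕ} : Continuous (norm1 (n := n)) := by
  unfold norm1
  exact continuous_finset_sum _ fun i _ => ((continuous_apply i).comp (PiLp.continuous_ofLp 2 _)).abs

lemma norm_le_norm1 {n : ℕ} (x : EuclideanSpace ℝ (Fin n)) : ‖x‖ ≤ norm1 x := by
  rw [EuclideanSpace.norm_eq]
  simp only [Real.norm_eq_abs]
  have h1 : ∑ i, |x i| ^ 2 ≤ (∑ i, |x i|) ^ 2 :=
    Finset.sum_sq_le_sq_sum_of_nonneg fun i _ => abs_nonneg _
  calc Real.sqrt (∑ i, |x i| ^ 2) ≤ Real.sqrt ((∑ i, |x i|) ^ 2) := Real.sqrt_le_sqrt h1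
  _ = ∑ i, |x i| := Real.sqrt_sq (Finset.sum_nonneg fun i _ => abs_nonneg _)

lemma norm1_smul {n : ℕ} (c : ℝ) (hc : 0 ≤ c) (x : EuclideanSpace ℝ (Fin n)) :
    norm1 (c • x) = c * norm1 x := by
  unfold norm1
  simp [Finset.mul_sum, abs_mul, abs_of_nonneg hc]

/-- Every cluster point x̄ of (x^k) solves (BP); moreover along any
subsequence x^{k_j} → x̄ one also has z^{k_j} → x̄. -/
theorem bpmap_cluster_points_solve {n m : ℕ} (hn : 1 ≤ n)
    (A : Matrix (Fin m) (Fin n) ℝ) (b : Fin m → ℝ)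
    (M : Set (EuclideanSpace ℝ (Fin n)))
    (hM : M = {x : EuclideanSpace ℝ (Fin n) | A.mulVec (WithLp.ofLp x) = b})
    (hMne : M.Nonempty)
    (rbar : ℝ) (hrbar : rbar = sInf (norm1 '' M))
    (r : ℕ → ℝ) (z x : ℕ → EuclideanSpace ℝ (Fin n))
    (hr0 : r 0 = 0) (hz0 : z 0 = 0)
    (hxM : ∀ k, x k ∈ M)
    (hzB : ∀ k, norm1 (z k) ≤ r k)
    (hbap : ∀ k, ∀ y ∈ M, ∀ w : EuclideanSpace ℝ (Fin n),
      norm1 w ≤ r k → dist (z k) (x k) ≤ dist w y)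
    (hrrec : ∀ k, r (k + 1) = r k + dist (z k) (x k)) :
    ∀ xbar : EuclideanSpace ℝ (Fin n), ∀ φ : ℕ → ℕ, StrictMono φ →
      Tendsto (fun j => x (φ j)) atTop (𝓝 xbar) →
      xbar ∈ M ∧ norm1 xbar = rbar ∧ Tendsto (fun j => z (φ j)) atTop (𝓝 xbar) := by
  intro xbar φ hφ hx
  -- M is closed
  have hclosed : IsClosed M := by
    rw [hM]
    have : Continuous fun v : EuclideanSpace ℝ (Fin n) => A.mulVec (WithLp.ofLp v) := by
      have := (A.mulVecLin.comp
        (EuclideanSpace.equiv (Fin n) ℝ : EuclideanSpace ℝ (Fin n) ≃ₗ[ℝ] (Fin n → ℝ)).toLinearMap).continuous_of_finiteDimensional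
      exact this
    exact isClosed_eq this continuous_const
  have hxbarM : xbar ∈ M := hclosed.mem_of_tendsto hx (Eventually.of_forall fun j => hxM (φ j))
  -- basic facts about rbar
  have hBdd : BddBelow (norm1 '' M) := ⟨0, fun t ⟨y, _, hy⟩ => hy ▸ norm1_nonneg y⟩
  have hne : (norm1 '' M).Nonempty := hMne.image _
  have hrbar_nonneg : 0 ≤ rbar := hrbar ▸ le_csInf hne fun t ⟨y, _, hy⟩ => hy ▸ norm1_nonneg y
  have hrbar_le : rbar ≤ norm1 xbar := hrbar ▸ csInf_le hBdd ⟨xbar, hxbarM, rfl⟩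
  -- monotonicity of r
  have hmono : Monotone r := monotone_nat_of_le_succ fun k => by
    rw [hrrec k]; linarith [dist_nonneg (x := z k) (y := x k)]
  have hrnonneg : ∀ k, 0 ≤ r k := fun k => hr0 ▸ hmono (Nat.zero_le k)
  -- r k ≤ rbar
  have hrle : ∀ k, r k ≤ rbar := by
    intro k
    induction k with
    | zero => rw [hr0]; exact hrbar_nonneg
    | succ k ih =>
      refine le_of_forall_pos_le_add ?_
      intro ε hε
      obtain ⟨t, ⟨xe, hxeM, rfl⟩, hlt⟩ :
          ∃ t ∈ norm1 '' M, t < rbar + ε := by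
        apply exists_lt_of_csInf_lt hne
        rw [← hrbar]; linarith
      by_cases hcase : norm1 xe ≤ r k
      · have h0 : dist (z k) (x k) ≤ dist xe xe := hbap k xe hxeM xe hcase
        rw [dist_self] at h0
        rw [hrrec k]; linarith
      · push_neg at hcase
        have hs : 0 < norm1 xe := lt_of_le_of_lt (hrnonneg k) hcase
        set c : ℝ := r k / norm1 xe with hc
        have hc0 : 0 ≤ c := div_nonneg (hrnonneg k) hs.le
        have hc1 : c ≤ 1 := by rw [hc, div_le_one hs]; exact hcase.le
        have hw : norm1 (c • xe) ≤ r k := by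
          rw [norm1_smul c hc0, hc, div_mul_cancel₀ _ hs.ne']
        have hd : dist (z k) (x k) ≤ dist (c • xe) xe := hbap k xe hxeM _ hw
        have hdist : dist (c • xe) xe ≤ norm1 xe - r k := by
          have : dist (c • xe) xe = (1 - c) * ‖xe‖ := by
            rw [dist_eq_norm]
            have : c • xe - xe = (c - 1) • xe := by rw [sub_smul, one_smul]
            rw [this, norm_smul, Real.norm_eq_abs, abs_of_nonpos (by linarith)]
            ring
          rw [this]
          calc (1 - c) * ‖xe‖ ≤ (1 - c) * norm1 xe :=
                mul_le_mul_of_nonneg_left (norm_le_norm1 xe) (by linarith)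
          _ = norm1 xe - r k := by rw [hc]; field_simp
        rw [hrrec k]; linarith
  -- dist (z k) (x k) → 0
  have hrbdd : BddAbove (Set.range r) := ⟨rbar, fun t ⟨k, hk⟩ => hk ▸ hrle k⟩
  have hrt : Tendsto r atTop (𝓝 (⨆ k, r k)) := tendsto_atTop_ciSup hmono hrbdd
  have hrt' : Tendsto (fun k => r (k + 1)) atTop (𝓝 (⨆ k, r k)) :=
    hrt.comp (tendsto_add_atTop_nat 1)
  have hdt : Tendsto (fun k => dist (z k) (x k)) atTop (𝓝 0) := by
    have := hrt'.sub hrt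
    rw [sub_self] at this
    convert this using 2 with k
    rw [hrrec k]; ring
  have hdtφ : Tendsto (fun j => dist (z (φ j)) (x (φ j))) atTop (𝓝 0) :=
    hdt.comp hφ.tendsto_atTop
  -- z (φ j) → xbar
  have hxd : Tendsto (fun j => dist (x (φ j)) xbar) atTop (𝓝 0) :=
    tendsto_iff_dist_tendsto_zero.mp hx
  have hzt : Tendsto (fun j => z (φ j)) atTop (𝓝 xbar) := by
    rw [tendsto_iff_dist_tendsto_zero]
    have hsum : Tendsto (fun j => dist (z (φ j)) (x (φ j)) + dist (x (φ j)) xbar)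
        atTop (𝓝 0) := by simpa using hdtφ.add hxd
    exact squeeze_zero (fun j => dist_nonneg)
      (fun j => dist_triangle (z (φ j)) (x (φ j)) xbar) hsum
  refine ⟨hxbarM, le_antisymm ?_ hrbar_le, hzt⟩
  -- norm1 xbar ≤ rbar
  have hn1 : Tendsto (fun j => norm1 (z (φ j))) atTop (𝓝 (norm1 xbar)) :=
    (norm1_continuous.tendsto xbar).comp hzt
  exact le_of_tendsto hn1 (Eventually.of_forall fun j => (hzB (φ j)).trans (hrle (φ j)))
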